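/- Duality formula for the generalized total variation metric: for weakly compact convex sets P, Q of probability measures on a Polish space, V(P,Q) = (1/2)·sup over bounded continuous φ with ‖φ‖_∞ ≤ 1 of |sup_{μ∈P} E_μ[φ] − sup_{ν∈Q} E_ν[φ]|. -/

import Mathlib

open MeasureTheory Real ENNReal Filter Topology
open scoped Classical

noncomputable def klDiv {X : Type*} [MeasurableSpace X] (μ ν : Measure X) : EReal :=
  if μ ≪ ν ∧ Integrable (fun x => Real.log (μ.rnDeriv ν x).toReal) μ
  then ((∫ x, Real.log (μ.rnDeriv ν x).toReal ∂μ : ℝ) : EReal)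
  else ⊤

noncomputable def tvDist {X : Type*} [MeasurableSpace X] (μ ν : Measure X) : ℝ :=
  ⨆ A : {A : Set X // MeasurableSet A}, |(μ A).toReal - (ν A).toReal|


noncomputable def genKL {X : Type*} [MeasurableSpace X]
    (P Q : Set (ProbabilityMeasure X)) : EReal :=
  ⨆ μ ∈ P, ⨅ ν ∈ Q, klDiv μ.toMeasure ν.toMeasure

noncomputable def genV {X : Type*} [MeasurableSpace X]
    (P Q : Set (ProbabilityMeasure X)) : ℝ :=
  max (⨆ μ : P, ⨅ ν : Q, tvDist μ.1.toMeasure ν.1.toMeasure)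
      (⨆ ν : Q, ⨅ μ : P, tvDist μ.1.toMeasure ν.1.toMeasure)

def ConvexPM {X : Type*} [MeasurableSpace X] (P : Set (ProbabilityMeasure X)) : Prop :=
  ∀ μ ∈ P, ∀ ν ∈ P, ∀ a b : ℝ≥0∞, a + b = 1 →
    ∃ κ ∈ P, κ.toMeasure = a • μ.toMeasure + b • ν.toMeasure

def midSet {X : Type*} [MeasurableSpace X]
    (P Q : Set (ProbabilityMeasure X)) : Set (ProbabilityMeasure X) :=
  {κ | ∃ μ ∈ P, ∃ ν ∈ Q, κ.toMeasure = (2:ℝ≥0∞)⁻¹ • μ.toMeasure + (2:ℝ≥0∞)⁻¹ • ν.toMeasure}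

noncomputable def genJS {X : Type*} [MeasurableSpace X]
    (P Q : Set (ProbabilityMeasure X)) : EReal :=
  ((1/2 : ℝ) : EReal) * genKL P (midSet P Q) + ((1/2 : ℝ) : EReal) * genKL Q (midSet P Q)

/-!
For single measures, `2 V(μ, ν) = sup_{‖φ‖ ≤ 1} (E_μ φ - E_ν φ)`: a Hahn decomposition of `μ - ν`
gives `≤`, and Urysohn functions squeezed between a closed inner and an open outer approximation
of a set give `≥`. For fixed `μ`, the pairing `(ν, φ) ↦ E_μ φ - E_ν φ` is continuous and affine
in each variable, and `ν ↦ (φ ↦ E_ν φ)` embeds the compact convex set `Q` into the locally convex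
space `ℝ^{C_b(X)}`, so Sion's minimax theorem exchanges `inf_{ν ∈ Q}` and `sup_φ`. Taking the
supremum over `μ ∈ P` yields `2 sup_μ inf_ν V(μ, ν) = sup_φ (𝔼^P φ - 𝔼^Q φ)`; exchanging `P` and
`Q` gives the other half of `V(P, Q)`, and `|a| = max a (-a)` combines the two.
-/

open BoundedContinuousFunction Set

lemma ciSup_comm {α β γ : Type*} [ConditionallyCompleteLattice α] {f : β → γ → α}
    (hf : BddAbove (range (Function.uncurry f))) : ⨆ b, ⨆ c, f b c = ⨆ c, ⨆ b, f b c := by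
  obtain ⟨C, hC⟩ := hf
  calc ⨆ b, ⨆ c, f b c = ⨆ p : β × γ, Function.uncurry f p := (ciSup_prod ⟨C, hC⟩).symm
    _ = ⨆ p : γ × β, Function.uncurry f p.swap :=
        ((Equiv.prodComm γ β).iSup_comp (g := Function.uncurry f)).symm
    _ = ⨆ c, ⨆ b, f b c :=
        ciSup_prod (f := fun p : γ × β => Function.uncurry f p.swap)
          ⟨C, forall_mem_range.2 fun p => hC ⟨p.swap, rfl⟩⟩

lemma ciSup_abs_sub_eq_max {ι : Sort*} {f g : ι → ℝ}
    (hfg : BddAbove (range fun i => |f i - g i|)) :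
    ⨆ i, |f i - g i| = max (⨆ i, (f i - g i)) (⨆ i, (g i - f i)) := by
  obtain ⟨C, hC⟩ := hfg
  simp only [abs_eq_max_neg, neg_sub] at hC ⊢
  exact ciSup_sup_eq ⟨C, forall_mem_range.2 fun i => (le_max_left _ _).trans (hC ⟨i, rfl⟩)⟩
    ⟨C, forall_mem_range.2 fun i => (le_max_right _ _).trans (hC ⟨i, rfl⟩)⟩

instance {X : Type*} [TopologicalSpace X] : Nonempty {φ : X →ᵇ ℝ // ‖φ‖ ≤ 1} := ⟨⟨0, by simp⟩⟩

section TotalVariation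

variable {X : Type*} [MeasurableSpace X] (μ ν : Measure X)

lemma tvDist_comm : tvDist μ ν = tvDist ν μ := by
  simp only [tvDist, abs_sub_comm]

variable [IsProbabilityMeasure μ] [IsProbabilityMeasure ν]

lemma abs_measureReal_sub_le_tvDist {A : Set X} (hA : MeasurableSet A) :
    |μ.real A - ν.real A| ≤ tvDist μ ν :=
  le_ciSup (f := fun A : {A : Set X // MeasurableSet A} => |μ.real A - ν.real A|)
    ⟨1, forall_mem_range.2 fun _ => abs_sub_le_of_nonneg_of_le measureReal_nonneg
      measureReal_le_one measureReal_nonneg measureReal_le_one⟩ ⟨A, hA⟩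

lemma measureReal_sub_le_tvDist {A : Set X} (hA : MeasurableSet A) :
    μ.real A - ν.real A ≤ tvDist μ ν :=
  (le_abs_self _).trans (abs_measureReal_sub_le_tvDist μ ν hA)

end TotalVariation

section Duality

variable {X : Type*} [MeasurableSpace X] [TopologicalSpace X] [OpensMeasurableSpace X]

lemma abs_integral_le_one (μ : Measure X) [IsProbabilityMeasure μ] {φ : X →ᵇ ℝ} (hφ : ‖φ‖ ≤ 1) :
    |∫ x, φ x ∂μ| ≤ 1 :=
  (norm_integral_le_norm μ φ).trans hφ

lemma abs_integral_sub_integral_le_of_le {m m' : Measure X} [IsFiniteMeasure m']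
    (hm : m ≤ m') {φ : X →ᵇ ℝ} (hφ : ‖φ‖ ≤ 1) :
    |∫ x, φ x ∂m' - ∫ x, φ x ∂m| ≤ m'.real univ - m.real univ := by
  have : IsFiniteMeasure m := isFiniteMeasure_of_le m' hm
  have hsplit : m' = (m' - m) + m := (Measure.sub_add_cancel_of_le hm).symm
  have hdiff : (m' - m).real univ = m'.real univ - m.real univ := by
    rw [measureReal_def, Measure.sub_apply MeasurableSet.univ hm,
      ENNReal.toReal_sub_of_le (hm univ) (measure_ne_top _ _)]
    rfl
  calc |∫ x, φ x ∂m' - ∫ x, φ x ∂m| = ‖∫ x, φ x ∂(m' - m)‖ := by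
        conv_lhs => rw [hsplit]
        rw [integral_add_measure (φ.integrable _) (φ.integrable _), add_sub_cancel_right,
          Real.norm_eq_abs]
    _ ≤ (m' - m).real univ * ‖φ‖ := norm_integral_le_mul_norm _ φ
    _ ≤ m'.real univ - m.real univ := by
        rw [← hdiff]; exact mul_le_of_le_one_right measureReal_nonneg hφ

lemma integral_sub_integral_le_two_mul_tvDist (μ ν : Measure X) [IsProbabilityMeasure μ]
    [IsProbabilityMeasure ν] {φ : X →ᵇ ℝ} (hφ : ‖φ‖ ≤ 1) :
    ∫ x, φ x ∂μ - ∫ x, φ x ∂ν ≤ 2 * tvDist μ ν := by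
  obtain ⟨s, hs, hνμ, hμν⟩ := exists_isHahnDecomposition ν μ
  have h₁ := abs_integral_sub_integral_le_of_le hνμ hφ
  have h₂ := abs_integral_sub_integral_le_of_le hμν hφ
  simp only [measureReal_restrict_apply_univ] at h₁ h₂
  have h₃ := measureReal_sub_le_tvDist μ ν hs
  have h₄ := measureReal_sub_le_tvDist ν μ hs.compl
  rw [tvDist_comm ν μ] at h₄
  rw [← integral_add_compl hs (φ.integrable μ), ← integral_add_compl hs (φ.integrable ν)]
  linarith [le_abs_self (∫ x in s, φ x ∂μ - ∫ x in s, φ x ∂ν),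
    neg_abs_le (∫ x in sᶜ, φ x ∂ν - ∫ x in sᶜ, φ x ∂μ)]

lemma measureReal_le_integral_of_eqOn_one (μ : Measure X) [IsFiniteMeasure μ] {g : X →ᵇ ℝ}
    (hg : ∀ x, 0 ≤ g x) {C : Set X} (hC : MeasurableSet C) (hgC : EqOn g 1 C) :
    μ.real C ≤ ∫ x, g x ∂μ := by
  rw [← integral_indicator_one hC]
  refine integral_mono ((integrable_const 1).indicator hC) (g.integrable μ) fun x => ?_
  by_cases hx : x ∈ C
  · simp [hx, hgC hx]
  · simp [hx, hg x]

lemma integral_le_measureReal_of_eqOn_zero (μ : Measure X) [IsFiniteMeasure μ] {g : X →ᵇ ℝ}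
    (hg : ∀ x, g x ≤ 1) {U : Set X} (hU : MeasurableSet U) (hgU : EqOn g 0 Uᶜ) :
    ∫ x, g x ∂μ ≤ μ.real U := by
  rw [← integral_indicator_one hU]
  refine integral_mono (g.integrable μ) ((integrable_const 1).indicator hU) fun x => ?_
  by_cases hx : x ∈ U
  · simp [hx, hg x]
  · simp [hx, hgU hx]

variable [TopologicalSpace.PseudoMetrizableSpace X] [BorelSpace X] (μ ν : Measure X)
  [IsProbabilityMeasure μ] [IsProbabilityMeasure ν]

lemma exists_lt_integral_sub_integral {A : Set X} (hA : MeasurableSet A) {c : ℝ}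
    (hc : c < 2 * (μ.real A - ν.real A)) :
    ∃ φ : X →ᵇ ℝ, ‖φ‖ ≤ 1 ∧ c < ∫ x, φ x ∂μ - ∫ x, φ x ∂ν := by
  set δ := (2 * (μ.real A - ν.real A) - c) / 4 with hδ
  have hδ_pos : ENNReal.ofReal δ ≠ 0 := by simp [hδ]; linarith
  obtain ⟨C, hCA, hC, hμC⟩ := hA.exists_isClosed_sdiff_lt (measure_ne_top μ A) hδ_pos
  obtain ⟨U, hAU, hU, -, hνU⟩ := hA.exists_isOpen_sdiff_lt (measure_ne_top ν A) hδ_pos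
  obtain ⟨g, hg0, hg1, hg⟩ := exists_bounded_zero_one_of_closed hU.isClosed_compl hC
    (disjoint_compl_left.mono_right (hCA.trans hAU))
  have hμ : μ.real A - μ.real C < δ := by
    rw [← measureReal_sdiff hCA hC.measurableSet]
    exact ENNReal.toReal_lt_of_lt_ofReal hμC
  have hν : ν.real U - ν.real A < δ := by
    rw [← measureReal_sdiff hAU hA]
    exact ENNReal.toReal_lt_of_lt_ofReal hνU
  have hgμ := measureReal_le_integral_of_eqOn_one μ (fun x => (hg x).1) hC.measurableSet hg1
  have hgν := integral_le_measureReal_of_eqOn_zero ν (fun x => (hg x).2) hU.measurableSet hg0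
  set φ : X →ᵇ ℝ := (2 : ℝ) • g - 1
  have hφ : ∀ x, φ x = 2 * g x - 1 := fun x => by simp [φ]
  have hφ_int : ∀ m : Measure X, [IsProbabilityMeasure m] →
      ∫ x, φ x ∂m = 2 * ∫ x, g x ∂m - 1 := fun m _ => by
    simp only [hφ]
    rw [integral_sub ((g.integrable m).const_mul 2) (integrable_const 1), integral_const_mul]
    simp
  refine ⟨φ, (norm_le zero_le_one).2 fun x => ?_, ?_⟩
  · rw [hφ, Real.norm_eq_abs, abs_le]
    constructor <;> linarith [(hg x).1, (hg x).2]
  · rw [hφ_int μ, hφ_int ν]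
    linarith

theorem iSup_integral_sub_integral_eq_two_mul_tvDist :
    ⨆ φ : {φ : X →ᵇ ℝ // ‖φ‖ ≤ 1}, (∫ x, φ.1 x ∂μ - ∫ x, φ.1 x ∂ν) = 2 * tvDist μ ν := by
  refine le_antisymm (ciSup_le fun φ => integral_sub_integral_le_two_mul_tvDist μ ν φ.2) ?_
  refine le_of_forall_lt fun c hc => ?_
  have : Nonempty {A : Set X // MeasurableSet A} := ⟨⟨∅, .empty⟩⟩
  obtain ⟨⟨A, hA⟩, hcA : c / 2 < |μ.real A - ν.real A|⟩ :=
    exists_lt_of_lt_ciSup (show c / 2 < tvDist μ ν by linarith)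
  obtain ⟨φ, hφ, hcφ⟩ : ∃ φ : X →ᵇ ℝ, ‖φ‖ ≤ 1 ∧ c < ∫ x, φ x ∂μ - ∫ x, φ x ∂ν := by
    rcases lt_abs.1 hcA with h | h
    · exact exists_lt_integral_sub_integral μ ν hA (by linarith)
    · refine exists_lt_integral_sub_integral μ ν hA.compl ?_
      rw [probReal_compl_eq_one_sub hA, probReal_compl_eq_one_sub hA]
      linarith
  exact hcφ.trans_le <| le_ciSup (f := fun φ : {φ : X →ᵇ ℝ // ‖φ‖ ≤ 1} =>
    ∫ x, φ.1 x ∂μ - ∫ x, φ.1 x ∂ν) ⟨2 * tvDist μ ν, forall_mem_range.2 fun φ =>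
      integral_sub_integral_le_two_mul_tvDist μ ν φ.2⟩ ⟨φ, hφ⟩

end Duality

section SublinearExpectation

variable {X : Type*} [MeasurableSpace X] [TopologicalSpace X] [OpensMeasurableSpace X]

noncomputable def BoundedContinuousFunction.integralCLM (μ : Measure X) [IsFiniteMeasure μ] :
    (X →ᵇ ℝ) →L[ℝ] ℝ :=
  LinearMap.mkContinuous
    { toFun := fun φ => ∫ x, φ x ∂μ
      map_add' := fun φ ψ => integral_add (φ.integrable μ) (ψ.integrable μ)
      map_smul' := fun c φ => integral_smul c fun x => φ x }
    (μ.real univ) (norm_integral_le_mul_norm μ)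

@[simp]
lemma BoundedContinuousFunction.integralCLM_apply (μ : Measure X) [IsFiniteMeasure μ]
    (φ : X →ᵇ ℝ) : integralCLM μ φ = ∫ x, φ x ∂μ :=
  rfl

noncomputable def sublinearExpectation (P : Set (ProbabilityMeasure X)) (φ : X →ᵇ ℝ) : ℝ :=
  ⨆ μ : P, ∫ x, φ x ∂μ.1.toMeasure

lemma bddAbove_range_integral (P : Set (ProbabilityMeasure X)) (φ : X →ᵇ ℝ) :
    BddAbove (range fun μ : P => ∫ x, φ x ∂μ.1.toMeasure) :=
  ⟨‖φ‖, forall_mem_range.2 fun _ => (le_abs_self _).trans (norm_integral_le_norm _ φ)⟩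

variable {P Q : Set (ProbabilityMeasure X)}

lemma integral_le_sublinearExpectation (φ : X →ᵇ ℝ) (μ : P) :
    ∫ x, φ x ∂μ.1.toMeasure ≤ sublinearExpectation P φ :=
  le_ciSup (bddAbove_range_integral P φ) μ

lemma abs_sublinearExpectation_le_norm (hP : P.Nonempty) (φ : X →ᵇ ℝ) :
    |sublinearExpectation P φ| ≤ ‖φ‖ := by
  have : Nonempty P := hP.to_subtype
  have h := fun μ : P => abs_le.1 (norm_integral_le_norm μ.1.toMeasure φ)
  exact abs_le.2 ⟨(h ⟨hP.some, hP.some_mem⟩).1.trans (integral_le_sublinearExpectation φ _),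
    ciSup_le fun μ => (h μ).2⟩

lemma isGLB_image_const_sub_integral (hQne : Q.Nonempty) (c : ℝ) (φ : X →ᵇ ℝ) :
    IsGLB ((fun ν : ProbabilityMeasure X => c - ∫ x, φ x ∂ν.toMeasure) '' Q)
      (c - sublinearExpectation Q φ) := by
  refine ⟨?_, fun b hb => ?_⟩
  · rintro _ ⟨ν, hν, rfl⟩
    exact sub_le_sub_left (integral_le_sublinearExpectation φ ⟨ν, hν⟩) c
  · have : Nonempty Q := hQne.to_subtype
    have : sublinearExpectation Q φ ≤ c - b :=
      ciSup_le fun ν => by linarith [hb ⟨ν.1, ν.2, rfl⟩]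
    linarith

lemma ConvexPM.convex_image_integralCLM (hP : ConvexPM P) :
    Convex ℝ ((fun μ : ProbabilityMeasure X => ⇑(integralCLM (μ : Measure X))) '' P) := by
  rintro _ ⟨μ₁, h₁, rfl⟩ _ ⟨μ₂, h₂, rfl⟩ a b ha hb hab
  obtain ⟨κ, hκ, hκ_eq⟩ := hP μ₁ h₁ μ₂ h₂ (ENNReal.ofReal a) (ENNReal.ofReal b)
    (by rw [← ENNReal.ofReal_add ha hb, hab, ENNReal.ofReal_one])
  refine ⟨κ, hκ, funext fun φ => ?_⟩
  simp only [integralCLM_apply, Pi.add_apply, Pi.smul_apply, smul_eq_mul, hκ_eq]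
  rw [integral_add_measure ((φ.integrable _).smul_measure ENNReal.ofReal_ne_top)
    ((φ.integrable _).smul_measure ENNReal.ofReal_ne_top), integral_smul_measure,
    integral_smul_measure, ENNReal.toReal_ofReal ha, ENNReal.toReal_ofReal hb, smul_eq_mul,
    smul_eq_mul]

theorem iInf_iSup_integral_sub_integral_eq (μ : ProbabilityMeasure X) (hQne : Q.Nonempty)
    (hQc : IsCompact Q) (hQconv : ConvexPM Q) :
    ⨅ ν : Q, ⨆ φ : {φ : X →ᵇ ℝ // ‖φ‖ ≤ 1},
        (∫ x, φ.1 x ∂μ.toMeasure - ∫ x, φ.1 x ∂ν.1.toMeasure)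
      = ⨆ φ : {φ : X →ᵇ ℝ // ‖φ‖ ≤ 1},
          (∫ x, φ.1 x ∂μ.toMeasure - sublinearExpectation Q φ.1) := by
  set Y : Set (X →ᵇ ℝ) := {φ | ‖φ‖ ≤ 1}
  set ι := fun ν : ProbabilityMeasure X => ⇑(integralCLM (ν : Measure X))
  have hY : Convex ℝ Y := by
    simpa [Y, Metric.closedBall, dist_zero_right] using convex_closedBall (0 : X →ᵇ ℝ) 1
  have hι : Continuous ι := continuous_pi fun φ =>
    ProbabilityMeasure.continuous_integral_boundedContinuousFunction φ
  have hbdd : ∀ (ν : ProbabilityMeasure X) (φ : X →ᵇ ℝ), ‖φ‖ ≤ 1 →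
      |∫ x, φ x ∂μ.toMeasure - ∫ x, φ x ∂ν.toMeasure| ≤ 2 := fun ν φ hφ => by
    linarith [abs_sub (∫ x, φ x ∂μ.toMeasure) (∫ x, φ x ∂ν.toMeasure),
      abs_integral_le_one μ.toMeasure hφ, abs_integral_le_one ν.toMeasure hφ]
  have hsup : ∀ ν : ProbabilityMeasure X, IsLUB ((fun φ => ∫ x, φ x ∂μ.toMeasure - ι ν φ) '' Y)
      (⨆ φ : Y, (∫ x, φ.1 x ∂μ.toMeasure - ι ν φ)) := fun ν =>
    isLUB_ciSup_set ⟨2, forall_mem_image.2 fun φ hφ => (le_abs_self _).trans (hbdd ν φ hφ)⟩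
      ⟨0, by simp [Y]⟩
  -- goals: semicontinuity and quasiconvexity in each variable, then the four sup/inf values
  refine Sion.minimax (f := fun L φ => ∫ x, φ x ∂μ.toMeasure - L φ) (Y := Y) (hQne.image ι)
    (hQc.image hι) ?_ ?_ hY ?_ ?_ hQconv.convex_image_integralCLM
    (fun L => ⨆ φ : Y, (∫ x, φ.1 x ∂μ.toMeasure - L φ)) ?_ _ ?_
    (fun φ => ∫ x, φ x ∂μ.toMeasure - sublinearExpectation Q φ) ?_ _ ?_
  · exact fun φ _ => (continuous_const.sub (continuous_apply φ)).lowerSemicontinuous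
      |>.lowerSemicontinuousOn _
  · exact fun φ _ => ((convexOn_const _ hQconv.convex_image_integralCLM).sub
      ((LinearMap.proj φ).concaveOn hQconv.convex_image_integralCLM)).quasiconvexOn
  · rintro _ ⟨ν, -, rfl⟩
    exact ((integralCLM μ.toMeasure).continuous.sub (integralCLM ν.toMeasure).continuous)
      |>.upperSemicontinuous.upperSemicontinuousOn _
  · rintro _ ⟨ν, -, rfl⟩
    exact ((integralCLM μ.toMeasure - integralCLM ν.toMeasure).toLinearMap.concaveOn hY)
      |>.quasiconcaveOn
  · rintro _ ⟨ν, -, rfl⟩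
    exact hsup ν
  · show IsGLB ((fun L => ⨆ φ : Y, (∫ x, φ.1 x ∂μ.toMeasure - L φ)) '' (ι '' Q)) _
    rw [image_image]
    exact isGLB_ciInf_set ⟨0, forall_mem_image.2 fun ν _ => by
      simpa [ι] using (hsup ν).1 ⟨0, by simp [Y], rfl⟩⟩ hQne
  · refine fun φ _ => ?_
    show IsGLB ((fun L => ∫ x, φ x ∂μ.toMeasure - L φ) '' (ι '' Q)) _
    rw [image_image]
    exact isGLB_image_const_sub_integral hQne _ φ
  · refine isLUB_ciSup_set ⟨2, forall_mem_image.2 fun φ hφ => ?_⟩ ⟨0, by simp [Y]⟩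
    linarith [abs_le.1 (abs_integral_le_one μ.toMeasure hφ),
      abs_le.1 ((abs_sublinearExpectation_le_norm hQne φ).trans hφ)]

lemma abs_sublinearExpectation_sub_le_two (hPne : P.Nonempty) (hQne : Q.Nonempty)
    {φ : X →ᵇ ℝ} (hφ : ‖φ‖ ≤ 1) : |sublinearExpectation P φ - sublinearExpectation Q φ| ≤ 2 := by
  linarith [abs_sub (sublinearExpectation P φ) (sublinearExpectation Q φ),
    abs_sublinearExpectation_le_norm hPne φ, abs_sublinearExpectation_le_norm hQne φ]

variable [TopologicalSpace.PseudoMetrizableSpace X] [BorelSpace X]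

theorem two_mul_iSup_iInf_tvDist_eq (hPne : P.Nonempty) (hQne : Q.Nonempty) (hQc : IsCompact Q)
    (hQconv : ConvexPM Q) :
    2 * ⨆ μ : P, ⨅ ν : Q, tvDist μ.1.toMeasure ν.1.toMeasure
      = ⨆ φ : {φ : X →ᵇ ℝ // ‖φ‖ ≤ 1},
          (sublinearExpectation P φ.1 - sublinearExpectation Q φ.1) := by
  have : Nonempty P := hPne.to_subtype
  calc 2 * ⨆ μ : P, ⨅ ν : Q, tvDist μ.1.toMeasure ν.1.toMeasure
      = ⨆ μ : P, ⨅ ν : Q, 2 * tvDist μ.1.toMeasure ν.1.toMeasure := by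
        simp only [Real.mul_iSup_of_nonneg zero_le_two, Real.mul_iInf_of_nonneg zero_le_two]
    _ = ⨆ μ : P, ⨆ φ : {φ : X →ᵇ ℝ // ‖φ‖ ≤ 1},
          (∫ x, φ.1 x ∂μ.1.toMeasure - sublinearExpectation Q φ.1) := by
        simp only [← iSup_integral_sub_integral_eq_two_mul_tvDist,
          iInf_iSup_integral_sub_integral_eq _ hQne hQc hQconv]
    _ = ⨆ φ : {φ : X →ᵇ ℝ // ‖φ‖ ≤ 1}, ⨆ μ : P,
          (∫ x, φ.1 x ∂μ.1.toMeasure - sublinearExpectation Q φ.1) :=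
        ciSup_comm ⟨2, forall_mem_range.2 fun ⟨μ, φ⟩ => by
          simp only [Function.uncurry_apply_pair]
          linarith [integral_le_sublinearExpectation φ.1 μ,
            (le_abs_self _).trans (abs_sublinearExpectation_sub_le_two hPne hQne φ.2)]⟩
    _ = _ := iSup_congr fun φ => (ciSup_sub (bddAbove_range_integral P φ.1) _).symm

end SublinearExpectation

theorem genV_duality {X : Type*} [MeasurableSpace X] [TopologicalSpace X]
    [PolishSpace X] [BorelSpace X] (P Q : Set (ProbabilityMeasure X))
    (hPne : P.Nonempty) (hQne : Q.Nonempty) (hPc : IsCompact P) (hQc : IsCompact Q)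
    (hPconv : ConvexPM P) (hQconv : ConvexPM Q) :
    genV P Q = (1/2) * ⨆ φ : {φ : BoundedContinuousFunction X ℝ // ‖φ‖ ≤ 1},
      |(⨆ μ : P, ∫ x, φ.1 x ∂μ.1.toMeasure) - (⨆ ν : Q, ∫ x, φ.1 x ∂ν.1.toMeasure)| := by
  have hPQ := two_mul_iSup_iInf_tvDist_eq hPne hQne hQc hQconv
  have hQP : 2 * ⨆ ν : Q, ⨅ μ : P, tvDist μ.1.toMeasure ν.1.toMeasure
      = ⨆ φ : {φ : X →ᵇ ℝ // ‖φ‖ ≤ 1},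
          (sublinearExpectation Q φ.1 - sublinearExpectation P φ.1) := by
    simpa only [tvDist_comm] using two_mul_iSup_iInf_tvDist_eq hQne hPne hPc hPconv
  change max _ _ = 1 / 2 * ⨆ φ : {φ : X →ᵇ ℝ // ‖φ‖ ≤ 1},
    |sublinearExpectation P φ.1 - sublinearExpectation Q φ.1|
  rw [ciSup_abs_sub_eq_max ⟨2, forall_mem_range.2 fun φ =>
      abs_sublinearExpectation_sub_le_two hPne hQne φ.2⟩, ← hPQ, ← hQP,
    ← mul_max_of_nonneg _ _ zero_le_two]
  ring
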